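/- Let n ≥ 2 be an integer and let f be a bounded continuous function on [0,∞). Then ‖Ṽ_n f‖ ≤ 2·‖f‖. -/

import Mathlib

open MeasureTheory Filter Set

/-- Baskakov basis functions `P_{n,k}(x)`, with `P_{n,k} := 0` for `k < 0`. -/
noncomputable def P (n : ℕ) (k : ℤ) (x : ℝ) : ℝ :=
  if k < 0 then 0
  else (Nat.choose (n + k.toNat - 1) k.toNat : ℝ) * x ^ k.toNat * (1 + x) ^ (-(n : ℤ) - k)

/-- The weight `ψ(x) = x(1+x)`. -/
noncomputable def psi (x : ℝ) : ℝ := x * (1 + x)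

/-- The differential operator `D̃ f = ψ f''`. -/
noncomputable def Dt (f : ℝ → ℝ) : ℝ → ℝ := fun x => psi x * deriv (deriv f) x

/-- The functionals `v_{n,k}`. -/
noncomputable def v (n k : ℕ) (f : ℝ → ℝ) : ℝ :=
  if k = 0 then f 0
  else ((n : ℝ) + 1) * ∫ t in Set.Ioi (0 : ℝ), P (n + 2) ((k : ℤ) - 1) t * f t

/-- The Goodman–Sharma–Baskakov operator `V_n`. -/
noncomputable def V (n : ℕ) (f : ℝ → ℝ) (x : ℝ) : ℝ :=
  ∑' k : ℕ, v n k f * P n (k : ℤ) x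

/-- The modified operator `Ṽ_n`. -/
noncomputable def Vt (n : ℕ) (f : ℝ → ℝ) (x : ℝ) : ℝ :=
  ∑' k : ℕ, v n k f * (P n (k : ℤ) x - (1 / (n : ℝ)) * Dt (P n (k : ℤ)) x)

/-- Supremum norm on `[0,∞)`. -/
noncomputable def supNorm (f : ℝ → ℝ) : ℝ := ⨆ x ∈ Set.Ici (0 : ℝ), |f x|

/-- `f` is bounded and continuous on `[0,∞)`. -/
def BddContOn (f : ℝ → ℝ) : Prop :=
  ContinuousOn f (Set.Ici 0) ∧ ∃ M, ∀ x ∈ Set.Ici (0 : ℝ), |f x| ≤ M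

/-- The space `W²(ψ)`: `g, g'` (locally) differentiable on `(0,∞)` and `D̃ g` bounded. -/
def MemW2 (g : ℝ → ℝ) : Prop :=
  DifferentiableOn ℝ g (Set.Ioi 0) ∧ DifferentiableOn ℝ (deriv g) (Set.Ioi 0) ∧
    ∃ M, ∀ x ∈ Set.Ioi (0 : ℝ), |Dt g x| ≤ M

/-- The space `W²₀(ψ)`: members of `W²(ψ)` with `D̃ g(x) → 0` as `x → 0⁺`. -/
def MemW20 (g : ℝ → ℝ) : Prop :=
  MemW2 g ∧ Filter.Tendsto (Dt g) (nhdsWithin 0 (Set.Ioi 0)) (nhds 0)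

/-- The K-functional `K(f,t)`. -/
noncomputable def Kfun (f : ℝ → ℝ) (t : ℝ) : ℝ :=
  sInf {a : ℝ | ∃ g : ℝ → ℝ, MemW20 g ∧ MemW2 (Dt g) ∧
    a = supNorm (fun x => f x - g x) + t * supNorm (Dt (Dt g))}

/-- The function `T_{n,k}(x)`. -/
noncomputable def T (n : ℕ) (k : ℤ) (x : ℝ) : ℝ :=
  (k : ℝ) * ((k : ℝ) - 1) * (1 + x) / x - 2 * (k : ℝ) * ((n : ℝ) + (k : ℝ))
    + ((n : ℝ) + (k : ℝ)) * ((n : ℝ) + (k : ℝ) + 1) * x / (1 + x)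

/-!
For `x > 0` one has `D̃ P_{n,k} = P_{n,k} T_{n,k}`, so
`Ṽ_n f(x) = ∑ₖ v_{n,k}(f) P_{n,k}(x) (1 - T_{n,k}(x)/n)`. Each functional satisfies
`|v_{n,k}(f)| ≤ ‖f‖`, since `(n+1) P_{n+2,k-1}` is a probability density on `(0,∞)`:
telescoping `P_{m,k}' = m (P_{m+1,k-1} - P_{m+1,k})` gives an explicit antiderivative.
The weights `P_{n,k}(x)` sum to `1`, and the first four moments of the Baskakov basis give
`∑ₖ P_{n,k}(x) (1 - T_{n,k}(x)/n)² = (3n+2)/n`. With `|w| ≤ 1 + w²/4` this yields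
`|Ṽ_n f(x)| ≤ ‖f‖ (1 + (3n+2)/(4n)) ≤ 2‖f‖` as soon as `n ≥ 2`; at `x = 0`,
`Ṽ_n f(0) = f(0)`.
-/

open Topology

lemma P_of_neg (n : ℕ) {k : ℤ} (hk : k < 0) (x : ℝ) : P n k x = 0 := if_pos hk

lemma P_natCast (n k : ℕ) (x : ℝ) :
    P n k x = ((n + k - 1).choose k : ℝ) * x ^ k * (1 + x) ^ (-(n : ℤ) - k) := by
  simp [P]

lemma P_nonneg (n : ℕ) (k : ℤ) {x : ℝ} (hx : 0 ≤ x) : 0 ≤ P n k x := by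
  unfold P
  split_ifs
  · exact le_rfl
  · have : 0 ≤ 1 + x := by linarith
    positivity

lemma P_apply_zero (n k : ℕ) : P n k 0 = if k = 0 then 1 else 0 := by
  rw [P_natCast]
  rcases k with _ | k <;> simp

lemma intCast_mul_P (m : ℕ) (k : ℤ) (x : ℝ) :
    (k : ℝ) * P m k x = m * x * P (m + 1) (k - 1) x := by
  obtain hk | rfl | hk := lt_trichotomy k 0
  · rw [P_of_neg m hk, P_of_neg _ (by omega)]; ring
  · rw [zero_sub, P_of_neg _ (by norm_num : (-1 : ℤ) < 0)]; simp
  · obtain ⟨i, rfl⟩ : ∃ i : ℕ, k = i + 1 := ⟨(k - 1).toNat, by omega⟩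
    have hchoose :
        ((i : ℝ) + 1) * ((m + i).choose (i + 1) : ℝ) = m * ((m + i).choose i : ℝ) := by
      have := Nat.choose_succ_right_eq (m + i) i
      rw [Nat.add_sub_cancel] at this
      exact_mod_cast by linarith
    rw [show (i : ℤ) + 1 - 1 = (i : ℕ) by ring,
      show (i : ℤ) + 1 = ((i + 1 : ℕ) : ℤ) by push_cast; ring, P_natCast, P_natCast,
      show m + (i + 1) - 1 = m + i by omega, show m + 1 + i - 1 = m + i by omega]
    push_cast
    rw [show -(m : ℤ) - (i + 1) = -((m : ℤ) + 1) - i by ring]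
    linear_combination (x ^ i * x * (1 + x) ^ (-((m : ℤ) + 1) - i)) * hchoose

lemma add_mul_P (m k : ℕ) {x : ℝ} (hx : 1 + x ≠ 0) :
    ((m : ℝ) + k) * P m k x = m * (1 + x) * P (m + 1) k x := by
  rcases m with _ | m
  · rcases k with _ | k
    · simp
    · rw [P_natCast]
      simp
  · have hchoose :
        ((m : ℝ) + 1 + k) * ((m + k).choose k : ℝ) =
          (m + 1) * ((m + 1 + k).choose k : ℝ) := by
      have := Nat.choose_mul_succ_eq (m + k) k
      rw [show m + k + 1 - k = m + 1 by omega, show m + k + 1 = m + 1 + k by ring] at this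
      exact_mod_cast by linarith
    rw [P_natCast, P_natCast, show m + 1 + k - 1 = m + k by omega,
      show m + 1 + 1 + k - 1 = m + 1 + k by omega]
    push_cast
    rw [show -((m : ℤ) + 1) - k = (-((m : ℤ) + 1 + 1) - k) + 1 by ring, zpow_add_one₀ hx]
    linear_combination (x ^ k * (1 + x) ^ (-((m : ℤ) + 1 + 1) - k) * (1 + x)) * hchoose

section Moments

lemma hasSum_P {m : ℕ} (hm : 0 < m) {x : ℝ} (hx : 0 ≤ x) :
    HasSum (fun k : ℕ => P m k x) 1 := by
  have h1x : 0 < 1 + x := by linarith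
  have hr : ‖x / (1 + x)‖ < 1 := by
    rw [Real.norm_of_nonneg (by positivity), div_lt_one h1x]; linarith
  have hsum : 1 / (1 - x / (1 + x)) ^ (m - 1 + 1) * (1 + x) ^ (-(m : ℤ)) = 1 := by
    have h1r : 1 - x / (1 + x) = (1 + x)⁻¹ := by field_simp; ring
    rw [h1r, Nat.sub_add_cancel hm, zpow_neg, zpow_natCast, inv_pow, one_div, inv_inv,
      mul_inv_cancel₀ (by positivity)]
  rw [← hsum]
  refine ((hasSum_choose_mul_geometric_of_norm_lt_one (m - 1) hr).mul_right _).congr_fun fun k => ?_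
  rw [P_natCast, show m + k - 1 = k + (m - 1) by omega, Nat.choose_symm_add,
    show -(m : ℤ) - k = -(m : ℤ) + (-(k : ℤ)) by ring, zpow_add₀ h1x.ne']
  simp only [zpow_neg, zpow_natCast, div_eq_mul_inv]
  ring

variable {m : ℕ} {x : ℝ}

lemma HasSum.pow_succ_mul_P {i : ℕ} {S : ℝ}
    (h : HasSum (fun k : ℕ => ((k : ℝ) + 1) ^ i * P (m + 1) k x) S) :
    HasSum (fun k : ℕ => (k : ℝ) ^ (i + 1) * P m k x) (m * x * S) := by
  refine (hasSum_nat_add_iff' 1).mp ?_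
  simp only [Finset.sum_range_one, Nat.cast_zero, ne_eq, Nat.add_eq_zero_iff, one_ne_zero,
    and_false, not_false_eq_true, zero_pow, zero_mul, sub_zero]
  refine (h.mul_left (m * x)).congr_fun fun k => ?_
  have := intCast_mul_P m (k + 1) x
  push_cast at this ⊢
  rw [pow_succ, mul_assoc, this, add_sub_cancel_right]
  ring

lemma hasSum_mul_P (hm : 0 < m) (hx : 0 ≤ x) :
    HasSum (fun k : ℕ => (k : ℝ) * P m k x) (m * x) := by
  have h := ((hasSum_P (m := m + 1) (by omega) hx).congr_fun
    (g := fun k : ℕ => ((k : ℝ) + 1) ^ 0 * P (m + 1) k x) fun k => by ring).pow_succ_mul_P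
  rw [mul_one] at h
  exact h.congr_fun fun k => by ring

lemma hasSum_sq_mul_P (hm : 0 < m) (hx : 0 ≤ x) :
    HasSum (fun k : ℕ => (k : ℝ) ^ 2 * P m k x) (m * x * ((m + 1) * x + 1)) := by
  have h := ((hasSum_mul_P (m := m + 1) (by omega) hx).add
    (hasSum_P (m := m + 1) (by omega) hx)).congr_fun
    (g := fun k : ℕ => ((k : ℝ) + 1) ^ 1 * P (m + 1) k x) fun k => by ring
  convert h.pow_succ_mul_P using 1
  push_cast; ring

lemma hasSum_pow_three_mul_P (hm : 0 < m) (hx : 0 ≤ x) :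
    HasSum (fun k : ℕ => (k : ℝ) ^ 3 * P m k x)
      (m * x * ((m + 1) * x * ((m + 2) * x + 1) + 2 * (m + 1) * x + 1)) := by
  have h := ((hasSum_sq_mul_P (m := m + 1) (by omega) hx).add
    (((hasSum_mul_P (m := m + 1) (by omega) hx).mul_left 2).add
      (hasSum_P (m := m + 1) (by omega) hx))).congr_fun
    (g := fun k : ℕ => ((k : ℝ) + 1) ^ 2 * P (m + 1) k x) fun k => by ring
  convert h.pow_succ_mul_P using 1
  push_cast; ring

lemma hasSum_pow_four_mul_P (hm : 0 < m) (hx : 0 ≤ x) :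
    HasSum (fun k : ℕ => (k : ℝ) ^ 4 * P m k x)
      (m * x * ((m + 1) * x * ((m + 2) * x * ((m + 3) * x + 1) + 2 * (m + 2) * x + 1)
        + 3 * ((m + 1) * x * ((m + 2) * x + 1)) + 3 * (m + 1) * x + 1)) := by
  have h := ((hasSum_pow_three_mul_P (m := m + 1) (by omega) hx).add
    (((hasSum_sq_mul_P (m := m + 1) (by omega) hx).mul_left 3).add
      (((hasSum_mul_P (m := m + 1) (by omega) hx).mul_left 3).add
        (hasSum_P (m := m + 1) (by omega) hx)))).congr_fun
    (g := fun k : ℕ => ((k : ℝ) + 1) ^ 3 * P (m + 1) k x) fun k => by ring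
  convert h.pow_succ_mul_P using 1
  push_cast; ring

end Moments

lemma hasDerivAt_P (n k : ℕ) {x : ℝ} (hx : 0 < x) :
    HasDerivAt (P n k) (P n k x * (k / x - (n + k) / (1 + x))) x := by
  have h1x : (1 + x) ≠ 0 := by positivity
  have hP : P n k =
      fun t => ((n + k - 1).choose k : ℝ) * (t ^ (k : ℤ) * (1 + t) ^ (-(n : ℤ) - k)) := by
    ext t; rw [P_natCast, zpow_natCast, mul_assoc]
  have hpow := hasDerivAt_zpow (k : ℤ) x (.inl hx.ne')
  have hshift := (hasDerivAt_zpow (-(n : ℤ) - k) (1 + x) (.inl h1x)).comp x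
    ((hasDerivAt_id x).const_add 1)
  rw [hP]
  refine ((hpow.mul hshift).const_mul ((n + k - 1).choose k : ℝ)).congr_deriv ?_
  rw [zpow_sub_one₀ hx.ne', zpow_sub_one₀ h1x]
  simp only [Function.comp_apply]
  push_cast
  field_simp
  ring

lemma deriv_deriv_P (n k : ℕ) {x : ℝ} (hx : 0 < x) :
    deriv (deriv (P n k)) x =
      P n k x * ((k / x - (n + k) / (1 + x)) ^ 2 - k / x ^ 2 + (n + k) / (1 + x) ^ 2) := by
  have h1x : (1 + x) ≠ 0 := by positivity
  have hderiv : deriv (P n k) =ᶠ[𝓝 x] fun t => P n k t * (k / t - (n + k) / (1 + t)) := by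
    filter_upwards [Ioi_mem_nhds hx] with t ht using (hasDerivAt_P n k ht).deriv
  have hlog : HasDerivAt (fun t : ℝ => k / t - (n + k) / (1 + t))
      (-k / x ^ 2 + (n + k) / (1 + x) ^ 2) x := by
    refine (((hasDerivAt_const x (k : ℝ)).div (hasDerivAt_id x) hx.ne').sub
      ((hasDerivAt_const x ((n : ℝ) + k)).div ((hasDerivAt_id x).const_add 1) h1x)).congr_deriv ?_
    simp only [id]
    ring
  rw [hderiv.deriv_eq]
  exact ((hasDerivAt_P n k hx).mul hlog).deriv.trans (by ring)

lemma Dt_P (n k : ℕ) {x : ℝ} (hx : 0 < x) : Dt (P n k) x = P n k x * T n k x := by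
  have h1x : (1 + x) ≠ 0 := by positivity
  rw [Dt, deriv_deriv_P n k hx, psi, T]
  push_cast
  field_simp
  ring

lemma hasSum_P_mul_one_sub_T_sq {n : ℕ} (hn : 0 < n) {x : ℝ} (hx : 0 < x) :
    HasSum (fun k : ℕ => P n k x * (1 - T n k x / n) ^ 2) ((3 * n + 2) / n : ℝ) := by
  have h1x : (1 + x) ≠ 0 := by positivity
  have hnR : (n : ℝ) ≠ 0 := by positivity
  set a : ℝ := -1 / (n * (x * (1 + x)))
  set b : ℝ := (1 + 2 * x + 2 * n * x) / (n * (x * (1 + x)))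
  set c : ℝ := 1 - (n + 1) * x / (1 + x)
  have hT (k : ℕ) : 1 - T n k x / n = a * k ^ 2 + b * k + c := by
    simp only [T, a, b, c, Int.cast_natCast]
    field_simp
    ring
  have h := ((hasSum_pow_four_mul_P hn hx.le).mul_left (a ^ 2)).add
    (((hasSum_pow_three_mul_P hn hx.le).mul_left (2 * a * b)).add
      (((hasSum_sq_mul_P hn hx.le).mul_left (b ^ 2 + 2 * a * c)).add
        (((hasSum_mul_P hn hx.le).mul_left (2 * b * c)).add
          ((hasSum_P hn hx.le).mul_left (c ^ 2)))))
  have h' : HasSum (fun k : ℕ => P n k x * (1 - T n k x / n) ^ 2) _ :=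
    h.congr_fun fun k => by rw [hT]; ring
  convert h' using 1
  simp only [a, b, c]
  field_simp
  ring

lemma continuousAt_P (n k : ℕ) {x : ℝ} (hx : 1 + x ≠ 0) : ContinuousAt (P n k) x := by
  rw [show P n k = fun t => ((n + k - 1).choose k : ℝ) * t ^ k * (1 + t) ^ (-(n : ℤ) - k) from
    funext (P_natCast n k)]
  exact ContinuousAt.mul (by fun_prop) (ContinuousAt.zpow₀ (by fun_prop) _ (.inl hx))

lemma tendsto_P_atTop {m : ℕ} (hm : 0 < m) (k : ℕ) : Tendsto (P m k) atTop (𝓝 0) := by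
  have hlim :
      Tendsto (fun t : ℝ => ((m + k - 1).choose k : ℝ) * (1 + t) ^ (-(m : ℤ))) atTop
        (𝓝 0) := by
    simpa using ((tendsto_zpow_atTop_zero (by omega : -(m : ℤ) < 0)).comp
      (tendsto_atTop_add_const_left _ 1 tendsto_id)).const_mul ((m + k - 1).choose k : ℝ)
  refine squeeze_zero' (eventually_ge_atTop 0 |>.mono fun t ht => P_nonneg m k ht) ?_ hlim
  filter_upwards [eventually_ge_atTop 0] with t ht
  have h1t : 0 < 1 + t := by linarith
  calc P m k t = ((m + k - 1).choose k : ℝ) * (t ^ k * (1 + t) ^ (-(m : ℤ) - k)) := by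
        rw [P_natCast, mul_assoc]
    _ ≤ ((m + k - 1).choose k : ℝ) * ((1 + t) ^ k * (1 + t) ^ (-(m : ℤ) - k)) := by
        gcongr _ * (?_ ^ _ * _)
        linarith
    _ = ((m + k - 1).choose k : ℝ) * (1 + t) ^ (-(m : ℤ)) := by
        rw [← zpow_natCast, ← zpow_add₀ h1t.ne', add_sub_cancel]

lemma hasDerivAt_P_eq_mul_sub (m k : ℕ) {x : ℝ} (hx : 0 < x) :
    HasDerivAt (P m k) (m * (P (m + 1) (k - 1) x - P (m + 1) k x)) x := by
  have h1x : 1 + x ≠ 0 := by positivity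
  refine (hasDerivAt_P m k hx).congr_deriv ?_
  have h1 := intCast_mul_P m k x
  have h2 := add_mul_P m k h1x
  push_cast at h1
  field_simp
  linear_combination (1 + x) * h1 - x * h2

lemma hasDerivAt_sum_range_P (m j : ℕ) {x : ℝ} (hx : 0 < x) :
    HasDerivAt (fun t => ∑ i ∈ Finset.range (j + 1), P m i t) (-(m * P (m + 1) j x)) x := by
  refine (HasDerivAt.fun_sum fun i _ => hasDerivAt_P_eq_mul_sub m i hx).congr_deriv ?_
  have htelescope := Finset.sum_range_sub' (fun i : ℕ => P (m + 1) ((i : ℤ) - 1) x) (j + 1)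
  push_cast at htelescope
  simp only [add_sub_cancel_right, zero_sub, P_of_neg _ (by norm_num : (-1 : ℤ) < 0)]
    at htelescope
  rw [← Finset.mul_sum, htelescope]
  ring

lemma integrableOn_P_and_integral_P {m : ℕ} (hm : 0 < m) (j : ℕ) :
    IntegrableOn (P (m + 1) j) (Ioi 0) ∧ ∫ t in Ioi 0, P (m + 1) j t = 1 / m := by
  have hmR : (m : ℝ) ≠ 0 := by positivity
  -- telescoping `P m i' = m (P (m + 1) (i - 1) - P (m + 1) i)` makes `G` an antiderivative
  set G : ℝ → ℝ := fun t => -(∑ i ∈ Finset.range (j + 1), P m i t) / m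
  have hcont : ContinuousWithinAt G (Ici 0) 0 :=
    ContinuousAt.continuousWithinAt <|
      (tendsto_finsetSum _ fun i _ => continuousAt_P m i (x := 0) (by norm_num)).neg.div_const _
  have hderiv (t : ℝ) (ht : t ∈ Ioi 0) : HasDerivAt G (P (m + 1) j t) t :=
    ((hasDerivAt_sum_range_P m j ht).neg.div_const _).congr_deriv (by field_simp)
  have hpos (t : ℝ) (ht : t ∈ Ioi 0) : 0 ≤ P (m + 1) j t := P_nonneg _ _ (le_of_lt ht)
  have htend : Tendsto G atTop (𝓝 0) := by
    simpa using (tendsto_finsetSum _ fun i _ => tendsto_P_atTop hm i).neg.div_const (m : ℝ)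
  have hG0 : G 0 = -1 / m := by simp [G, P_apply_zero]
  refine ⟨integrableOn_Ioi_deriv_of_nonneg hcont hderiv hpos htend, ?_⟩
  rw [integral_Ioi_of_hasDerivAt_of_nonneg hcont hderiv hpos htend, hG0]
  ring

lemma abs_v_le (n k : ℕ) {f : ℝ → ℝ} {M : ℝ} (hf : ∀ t, 0 ≤ t → |f t| ≤ M) :
    |v n k f| ≤ M := by
  have hM : 0 ≤ M := (abs_nonneg _).trans (hf 0 le_rfl)
  rcases k with _ | j
  · simpa [v] using hf 0 le_rfl
  rw [v, if_neg (by omega), show ((j + 1 : ℕ) : ℤ) - 1 = j by push_cast; ring]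
  obtain ⟨hint, hval⟩ := integrableOn_P_and_integral_P (m := n + 1) (by omega) j
  by_cases hPf : IntegrableOn (fun t => P (n + 2) j t * f t) (Ioi 0)
  · have hle :
        ‖∫ t in Ioi 0, P (n + 2) j t * f t‖ ≤ ∫ t in Ioi 0, M * P (n + 2) j t := by
      refine norm_integral_le_of_norm_le (hint.const_mul M) ?_
      filter_upwards [ae_restrict_mem measurableSet_Ioi] with t ht
      have hP := P_nonneg (n + 2) j (le_of_lt ht)
      rw [norm_mul, Real.norm_of_nonneg hP, Real.norm_eq_abs, mul_comm]
      exact mul_le_mul_of_nonneg_right (hf t (le_of_lt ht)) hP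
    rw [integral_const_mul, hval, Real.norm_eq_abs] at hle
    rw [abs_mul, abs_of_pos (by positivity)]
    calc ((n : ℝ) + 1) * |∫ t in Ioi 0, P (n + 2) j t * f t|
        ≤ ((n : ℝ) + 1) * (M * (1 / ((n + 1 : ℕ) : ℝ))) := by gcongr
      _ = M := by push_cast; field_simp
  · rw [integral_undef hPf, mul_zero, abs_zero]
    exact hM

lemma abs_tsum_mul_mul_le {p w a : ℕ → ℝ} {M c : ℝ} (hp : ∀ k, 0 ≤ p k)
    (h1 : HasSum p 1) (h2 : HasSum (fun k => p k * w k ^ 2) c) (ha : ∀ k, |a k| ≤ M) :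
    |∑' k, a k * (p k * w k)| ≤ M * (1 + c / 4) := by
  have hM : 0 ≤ M := (abs_nonneg _).trans (ha 0)
  rw [← Real.norm_eq_abs]
  refine tsum_of_norm_bounded ((h1.add (h2.div_const 4)).mul_left M) fun k => ?_
  -- AM-GM
  have hw : |w k| ≤ 1 + w k ^ 2 / 4 := by nlinarith [sq_nonneg (|w k| - 2), sq_abs (w k)]
  rw [Real.norm_eq_abs, abs_mul, abs_mul, abs_of_nonneg (hp k)]
  calc |a k| * (p k * |w k|) ≤ M * (p k * (1 + w k ^ 2 / 4)) := by
        have := hp k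
        gcongr
        exact ha k
    _ = M * (p k + p k * w k ^ 2 / 4) := by ring

lemma Vt_apply_zero (n : ℕ) (f : ℝ → ℝ) : Vt n f 0 = f 0 := by
  rw [Vt, tsum_eq_single 0 fun k hk => by simp [Dt, psi, P_apply_zero, hk], P_apply_zero]
  simp [Dt, psi, v]

lemma abs_Vt_le {n : ℕ} (hn : 2 ≤ n) {f : ℝ → ℝ} {M : ℝ}
    (hf : ∀ t, 0 ≤ t → |f t| ≤ M) {x : ℝ} (hx : 0 ≤ x) : |Vt n f x| ≤ 2 * M := by
  have hM : 0 ≤ M := (abs_nonneg _).trans (hf 0 le_rfl)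
  rcases hx.eq_or_lt with rfl | hx
  · rw [Vt_apply_zero]
    linarith [hf 0 le_rfl]
  have hVt : Vt n f x = ∑' k : ℕ, v n k f * (P n k x * (1 - T n k x / n)) := by
    refine tsum_congr fun k => ?_
    rw [Dt_P n k hx]
    ring
  have hn' : (2 : ℝ) ≤ n := by exact_mod_cast hn
  calc |Vt n f x| ≤ M * (1 + (3 * n + 2) / n / 4) := hVt ▸ abs_tsum_mul_mul_le
        (fun k => P_nonneg n k hx.le) (hasSum_P (by omega) hx.le)
        (hasSum_P_mul_one_sub_T_sq (by omega) hx) (fun k => abs_v_le n k hf)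
    _ ≤ 2 * M := by
      rw [← sub_nonneg]
      have : 2 * M - M * (1 + (3 * n + 2) / n / 4) = M * ((n - 2) / (4 * n)) := by
        field_simp; ring
      rw [this]
      exact mul_nonneg hM (div_nonneg (by linarith) (by positivity))

lemma abs_le_supNorm {f : ℝ → ℝ} (hf : ∃ M, ∀ x ∈ Ici (0 : ℝ), |f x| ≤ M) {x : ℝ}
    (hx : 0 ≤ x) : |f x| ≤ supNorm f := by
  obtain ⟨M, hM⟩ := hf
  have hbdd : BddAbove (range fun y => ⨆ _ : y ∈ Ici (0 : ℝ), |f y|) := by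
    refine ⟨max M 0, forall_mem_range.mpr fun y => ?_⟩
    by_cases hy : y ∈ Ici (0 : ℝ)
    · rw [ciSup_pos hy]
      exact le_max_of_le_left (hM y hy)
    · simp [hy]
  exact (ciSup_pos (f := fun _ : x ∈ Ici (0 : ℝ) => |f x|) hx).symm.le.trans (le_ciSup hbdd x)

lemma supNorm_le {g : ℝ → ℝ} {c : ℝ} (hc : 0 ≤ c) (h : ∀ x, 0 ≤ x → |g x| ≤ c) :
    supNorm g ≤ c :=
  Real.iSup_le (fun x => Real.iSup_le (h x) hc) hc

theorem Vt_norm_bound (n : ℕ) (hn : 2 ≤ n) (f : ℝ → ℝ) (hf : BddContOn f) :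
    supNorm (Vt n f) ≤ 2 * supNorm f := by
  have hbound (t : ℝ) (ht : 0 ≤ t) : |f t| ≤ supNorm f := abs_le_supNorm hf.2 ht
  have hM : 0 ≤ supNorm f := (abs_nonneg _).trans (hbound 0 le_rfl)
  exact supNorm_le (by positivity) fun x hx => abs_Vt_le hn hbound hx
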